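/- arXiv:2503.18908 — 2 statements merged into one kernel-verified Lean document; each statement's English description precedes it below -/
import Mathlib

section
/- Under the same small-contribution hypothesis (‖H^j(x)‖ ≤ ε‖x‖ for all x) and assuming each H^j is L-Lipschitz, the difference between the sequential composition (id + H^c)∘⋯∘(id + H^1) and the parallel fusion x ↦ x + Σⱼ H^j(x) is bounded in norm by a term of order ε² (times constants depending on c and L) for every input x with ‖x‖ ≤ 1; specifically, ‖(f^c∘⋯∘f^1)(x) − x − Σⱼ H^j(x)‖ ≤ Σⱼ L·((1+ε)^{j−1} − 1)·‖x‖. -/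
/-!
Write `g_k` for the composition of the first `k` maps `id + H^j`. Each step moves the point by
at most `ε` times its norm, and `‖g_k x‖ ≤ ‖g_k x - x‖ + ‖x‖` turns this into the geometric drift
bound `‖g_k x - x‖ ≤ ((1 + ε)^k - 1) ‖x‖`.
The sequential and the parallel update differ at step `k` by `H^k (g_k x) - H^k x`, which the
Lipschitz bound controls by `L ((1 + ε)^k - 1) ‖x‖`; summing over `k` gives the claim.
-/

section

variable {E : Type*} [SeminormedAddCommGroup E]

/-- The paper's `f^c ∘ ⋯ ∘ f^1`: `(id + H (n - 1)) ∘ ⋯ ∘ (id + H 0)`, so `H 0` acts first. -/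
def residualComp {n : ℕ} (H : Fin n → E → E) (x : E) : E :=
  (List.finRange n).foldl (fun y j => y + H j y) x

@[simp]
lemma residualComp_zero (H : Fin 0 → E → E) (x : E) : residualComp H x = x := rfl

lemma residualComp_succ {n : ℕ} (H : Fin (n + 1) → E → E) (x : E) :
    residualComp H x = residualComp (fun j => H j.castSucc) x
      + H (Fin.last n) (residualComp (fun j => H j.castSucc) x) := by
  simp only [residualComp, List.finRange_succ_last, List.foldl_append, List.foldl_map,
    List.foldl_cons, List.foldl_nil]

variable {ε L : ℝ}

lemma norm_residualComp_sub_le (hε : 0 ≤ ε) {n : ℕ} (H : Fin n → E → E)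
    (hH : ∀ j y, ‖H j y‖ ≤ ε * ‖y‖) (x : E) :
    ‖residualComp H x - x‖ ≤ ((1 + ε) ^ n - 1) * ‖x‖ := by
  induction n with
  | zero => simp
  | succ n ih =>
    rw [residualComp_succ]
    set g := residualComp (fun j => H j.castSucc) x
    have hg : ‖g - x‖ ≤ ((1 + ε) ^ n - 1) * ‖x‖ := ih _ fun j => hH j.castSucc
    have hstep : ‖H (Fin.last n) g‖ ≤ ε * (‖g - x‖ + ‖x‖) :=
      (hH _ g).trans (mul_le_mul_of_nonneg_left (norm_le_norm_sub_add g x) hε)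
    calc ‖g + H (Fin.last n) g - x‖ = ‖(g - x) + H (Fin.last n) g‖ := by
          rw [sub_add_eq_add_sub]
      _ ≤ ‖g - x‖ + ‖H (Fin.last n) g‖ := norm_add_le _ _
      _ ≤ (1 + ε) * ‖g - x‖ + ε * ‖x‖ := by linarith
      _ ≤ (1 + ε) * (((1 + ε) ^ n - 1) * ‖x‖) + ε * ‖x‖ := by gcongr
      _ = ((1 + ε) ^ (n + 1) - 1) * ‖x‖ := by ring

lemma norm_residualComp_sub_sum_le (hε : 0 ≤ ε) (hL : 0 ≤ L) {n : ℕ} (H : Fin n → E → E)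
    (hH : ∀ j y, ‖H j y‖ ≤ ε * ‖y‖) (hLip : ∀ j y z, ‖H j y - H j z‖ ≤ L * ‖y - z‖) (x : E) :
    ‖residualComp H x - x - ∑ j, H j x‖ ≤ ∑ j : Fin n, L * ((1 + ε) ^ (j : ℕ) - 1) * ‖x‖ := by
  induction n with
  | zero => simp
  | succ n ih =>
    rw [residualComp_succ, Fin.sum_univ_castSucc, Fin.sum_univ_castSucc]
    set g := residualComp (fun j => H j.castSucc) x
    have hg : ‖g - x - ∑ j : Fin n, H j.castSucc x‖
        ≤ ∑ j : Fin n, L * ((1 + ε) ^ (j : ℕ) - 1) * ‖x‖ :=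
      ih _ (fun j => hH j.castSucc) (fun j => hLip j.castSucc)
    have hstep : ‖H (Fin.last n) g - H (Fin.last n) x‖ ≤ L * ((1 + ε) ^ n - 1) * ‖x‖ := by
      rw [mul_assoc]
      exact (hLip _ g x).trans <| mul_le_mul_of_nonneg_left
        (norm_residualComp_sub_le hε _ (fun j => hH j.castSucc) x) hL
    calc ‖g + H (Fin.last n) g - x - (∑ j : Fin n, H j.castSucc x + H (Fin.last n) x)‖
        = ‖(g - x - ∑ j : Fin n, H j.castSucc x) + (H (Fin.last n) g - H (Fin.last n) x)‖ := by
          congr 1; abel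
      _ ≤ _ := (norm_add_le _ _).trans (add_le_add hg hstep)

end

theorem sequential_vs_parallel_bound_general (d c : ℕ) (ε L : ℝ) (hε : 0 ≤ ε) (hL : 0 ≤ L)
    (H : Fin c → EuclideanSpace ℝ (Fin d) → EuclideanSpace ℝ (Fin d))
    (hH : ∀ j x, ‖H j x‖ ≤ ε * ‖x‖)
    (hLip : ∀ j x y, ‖H j x - H j y‖ ≤ L * ‖x - y‖)
    (x : EuclideanSpace ℝ (Fin d)) :
    ‖(List.finRange c).foldl (fun y j => y + H j y) x - x - ∑ j : Fin c, H j x‖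
      ≤ ∑ j : Fin c, L * ((1 + ε) ^ (j : ℕ) - 1) * ‖x‖ :=
  norm_residualComp_sub_sum_le hε hL H hH hLip x

/-- with ‖Hʲ(x)‖ ≤ ε‖x‖ and each Hʲ L-Lipschitz, the difference
between the sequential composition and the parallel fusion is bounded:
‖(f^c∘⋯∘f^1)(x) − x − Σⱼ Hʲ(x)‖ ≤ Σⱼ L·((1+ε)^{j−1} − 1)·‖x‖ for ‖x‖ ≤ 1. -/
theorem sequential_vs_parallel_bound (d c : ℕ) (ε L : ℝ) (hε : 0 ≤ ε) (hL : 0 ≤ L)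
    (H : Fin c → EuclideanSpace ℝ (Fin d) → EuclideanSpace ℝ (Fin d))
    (hH : ∀ j x, ‖H j x‖ ≤ ε * ‖x‖)
    (hLip : ∀ j x y, ‖H j x - H j y‖ ≤ L * ‖x - y‖)
    (x : EuclideanSpace ℝ (Fin d)) (hx : ‖x‖ ≤ 1) :
    ‖(List.finRange c).foldl (fun y j => y + H j y) x - x - ∑ j : Fin c, H j x‖
      ≤ ∑ j : Fin c, L * ((1 + ε) ^ (j : ℕ) - 1) * ‖x‖ :=
  sequential_vs_parallel_bound_general d c ε L hε hL H hH hLip x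
end

section
/- If ‖h(X)‖ ≤ r‖X‖ for some 0 ≤ r < 1, then the angle between X and f(X) = X + h(X) satisfies cos∠(X, f(X)) ≥ √(1 − r²); equivalently, the cosine distance between X and f(X) is at most 1 − √(1−r²). -/
open RealInnerProductSpace

/-- if ‖h(X)‖ ≤ r‖X‖ with 0 ≤ r < 1, then
cos∠(X, X + h(X)) ≥ √(1 − r²); equivalently the cosine distance is at most
1 − √(1−r²). -/
theorem cosine_bound_small_contribution (d : ℕ) (r : ℝ) (hr0 : 0 ≤ r) (hr1 : r < 1)
    (X h : EuclideanSpace ℝ (Fin d)) (hX : X ≠ 0)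
    (hh : ‖h‖ ≤ r * ‖X‖) :
    Real.sqrt (1 - r ^ 2) ≤ ⟪X, X + h⟫ / (‖X‖ * ‖X + h‖)
    ∧ 1 - ⟪X, X + h⟫ / (‖X‖ * ‖X + h‖) ≤ 1 - Real.sqrt (1 - r ^ 2) := by
  set a := ‖X‖ with ha
  set b := ‖X + h‖ with hb
  set c := Real.sqrt (1 - r ^ 2) with hcdef
  have ha0 : 0 < a := norm_pos_iff.mpr hX
  have hhn : 0 ≤ ‖h‖ := norm_nonneg h
  have hr2 : (0:ℝ) ≤ 1 - r ^ 2 := by nlinarith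
  have hc0 : 0 ≤ c := Real.sqrt_nonneg _
  have hc2 : c ^ 2 = 1 - r ^ 2 := Real.sq_sqrt hr2
  have hba : a ≤ b + ‖h‖ := by
    have := norm_add_le (X + h) (-h)
    simpa using this
  have hb0 : 0 < b := by nlinarith
  have hinner : ⟪X, X + h⟫ = a ^ 2 + ⟪X, h⟫ := by
    rw [inner_add_right, real_inner_self_eq_norm_sq]
  have hb2 : b ^ 2 = a ^ 2 + 2 * ⟪X, h⟫ + ‖h‖ ^ 2 := norm_add_sq_real X h
  have hh2 : ‖h‖ ^ 2 ≤ r ^ 2 * a ^ 2 := by nlinarith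
  have hamgm : 0 ≤ (c * a - b) ^ 2 := sq_nonneg _
  have key : c * a * b ≤ a ^ 2 + ⟪X, h⟫ := by nlinarith
  have hdenom : 0 < a * b := mul_pos ha0 hb0
  have h1 : c ≤ ⟪X, X + h⟫ / (a * b) := by
    rw [le_div_iff₀ hdenom, hinner]
    nlinarith
  exact ⟨h1, by linarith⟩
end
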